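/- arXiv:1305.5662 — 2 statements merged into one kernel-verified Lean document; each statement's English description precedes it below -/
import Mathlib

section
/- For every real p with 0 < p < 1/e and every real m with e < m < 1/p, we have 1 - (1-p)^m ≤ (m / log₂ m) · p · log₂(1/p), where log₂ denotes the base-2 logarithm and (1-p)^m is the real power. -/
theorem stmt_1 (p m : ℝ) (hp : 0 < p) (hpe : p < 1 / Real.exp 1)
    (hm : Real.exp 1 < m) (hm' : m < 1 / p) :
    1 - (1 - p) ^ m ≤ (m / Real.logb 2 m) * p * Real.logb 2 (1 / p) := by
  have hm1 : 1 < m := lt_trans (by nlinarith [Real.add_one_lt_exp (one_ne_zero)]) hm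
  have hL : 0 < Real.logb 2 m := Real.logb_pos one_lt_two hm1
  have hL' : Real.logb 2 m ≤ Real.logb 2 (1 / p) :=
    Real.logb_le_logb_of_le one_lt_two (by linarith) (le_of_lt hm')
  -- Bernoulli: (1 - p)^m ≥ 1 - m*p
  have hb : 1 + m * (-p) ≤ (1 + (-p)) ^ m := by
    apply one_add_mul_self_le_rpow_one_add
    · nlinarith [Real.exp_one_gt_d9, hpe, hp, mul_pos hp (Real.exp_pos 1), (div_lt_one (Real.exp_pos 1)).mpr (by nlinarith [Real.exp_one_gt_d9] : (1:ℝ) < Real.exp 1)]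
    · linarith
  have h1 : 1 - (1 - p) ^ m ≤ m * p := by
    have : (1 - p : ℝ) = 1 + (-p) := by ring
    rw [this]; nlinarith [hb]
  have h2 : m * p ≤ (m / Real.logb 2 m) * p * Real.logb 2 (1 / p) := by
    rw [div_mul_eq_mul_div, div_mul_eq_mul_div, le_div_iff₀ hL]
    have hmp : 0 ≤ m * p := by positivity
    nlinarith [hmp]
  linarith
end

section
/- Let C be a finite set of coupons with probabilities p : C → ℝ satisfying p o > 0 for all o and ∑ p o = 1. For m draws, the expected number of distinct coupons collected is E = ∑_{o ∈ C} (1 - (1 - p o)^m). Then for every natural number m ≥ 3, E ≤ (m / log₂ m) · H + 3, where H = ∑_{o ∈ C} p o · log₂(1 / p o) is the entropy. -/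
/-!
Write `x * log₂ (1 / x) = negMulLog x / log 2`, so that the right-hand side is
`∑ m · negMulLog (p o) / log m + 3`. A coupon with `p o ≤ 1 / 3` satisfies
`1 - (1 - p o)^m ≤ m · negMulLog (p o) / log m`: for `p o ≤ 1 / m` this is Bernoulli's inequality
`1 - (1 - x)^m ≤ m x` together with `log m ≤ log (1 / x)`, and for `1 / m < p o ≤ 1 / 3` concavity
of `negMulLog` bounds it below on `[1 / m, 1 / 3]` by `log m / m`, which makes the right-hand side
at least `1`. Since the probabilities sum to `1`, at most three coupons have `p o > 1 / 3`, and each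
of them contributes at most `1`.
-/

open Real Finset

lemma mul_logb_one_div_eq_negMulLog_div (b x : ℝ) :
    x * logb b (1 / x) = negMulLog x / log b := by
  rw [logb, one_div, log_inv, negMulLog]
  ring

lemma log_div_self_le_negMulLog {a x : ℝ} (ha : 3 ≤ a) (hax : 1 / a ≤ x) (hx : x ≤ 1 / 3) :
    log a / a ≤ negMulLog x := by
  have hlog_le : log a / a ≤ log 3 / 3 := by
    have he : exp 1 ≤ 3 := by linarith [exp_one_lt_d9]
    exact log_div_self_antitoneOn (by simpa using he) (by simpa using he.trans ha) ha
  have hendpoint (t : ℝ) : negMulLog (1 / t) = log t / t := by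
    rw [negMulLog, one_div, log_inv]
    ring
  have hseg := strictConcaveOn_negMulLog.concaveOn.ge_on_segment
    (Set.mem_Ici.mpr (by positivity : (0 : ℝ) ≤ 1 / a))
    (Set.mem_Ici.mpr (by norm_num : (0 : ℝ) ≤ 1 / 3))
    (z := x) (by rw [segment_eq_Icc (hax.trans hx)]; exact ⟨hax, hx⟩)
  rw [hendpoint, hendpoint, min_eq_left hlog_le] at hseg
  exact hseg

lemma one_sub_one_sub_pow_le_mul_negMulLog_div_log {m : ℕ} (hm : 3 ≤ m) {x : ℝ} (hx0 : 0 < x)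
    (hx : x ≤ 1 / 3) :
    1 - (1 - x) ^ m ≤ m * negMulLog x / log m := by
  have hm3 : (3 : ℝ) ≤ m := by exact_mod_cast hm
  have hlog : 0 < log m := log_pos (by linarith)
  rw [le_div_iff₀ hlog]
  rcases le_or_gt x (1 / m) with hsmall | hlarge
  · have hbernoulli : 1 - m * x ≤ (1 - x) ^ m := by
      simpa [sub_eq_add_neg] using one_add_mul_le_pow (a := -x) (by linarith) m
    have hlog_le : log m ≤ log (1 / x) :=
      log_le_log (by positivity) ((le_one_div (by positivity : (0 : ℝ) < m) hx0).mpr hsmall)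
    rw [one_div, log_inv] at hlog_le
    calc (1 - (1 - x) ^ m) * log m ≤ m * x * log m :=
          mul_le_mul_of_nonneg_right (by linarith) hlog.le
      _ ≤ m * x * -log x := by gcongr
      _ = m * negMulLog x := by rw [negMulLog]; ring
  · have hentropy := log_div_self_le_negMulLog hm3 hlarge.le hx
    rw [div_le_iff₀ (by linarith)] at hentropy
    have hpow : 0 ≤ (1 - x) ^ m := pow_nonneg (by linarith) m
    nlinarith

lemma one_sub_one_sub_pow_le_mul_negMulLog_div_log_add_ite {m : ℕ} (hm : 3 ≤ m) {x : ℝ}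
    (hx0 : 0 < x) (hx1 : x ≤ 1) :
    1 - (1 - x) ^ m ≤ m * negMulLog x / log m + if 1 / 3 < x then 1 else 0 := by
  split_ifs with hlarge
  · have hm1 : (1 : ℝ) < m := by norm_cast; omega
    have hentropy : 0 ≤ m * negMulLog x / log m :=
      div_nonneg (mul_nonneg (Nat.cast_nonneg m) (negMulLog_nonneg hx0.le hx1)) (log_pos hm1).le
    linarith [pow_nonneg (sub_nonneg.mpr hx1) m]
  · rw [add_zero]
    exact one_sub_one_sub_pow_le_mul_negMulLog_div_log hm hx0 (not_lt.mp hlarge)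

lemma card_filter_lt_mul_le_sum {ι : Type*} (s : Finset ι) (f : ι → ℝ) (hf : ∀ i ∈ s, 0 ≤ f i)
    (ε : ℝ) : #{i ∈ s | ε < f i} * ε ≤ ∑ i ∈ s, f i := by
  calc #{i ∈ s | ε < f i} * ε = #{i ∈ s | ε < f i} • ε := (nsmul_eq_mul _ _).symm
    _ ≤ ∑ i ∈ s with ε < f i, f i := card_nsmul_le_sum _ _ _ fun i hi ↦ (mem_filter.mp hi).2.le
    _ ≤ ∑ i ∈ s, f i := sum_le_sum_of_subset_of_nonneg (filter_subset _ _) fun i hi _ ↦ hf i hi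

theorem stmt_4 {C : Type*} [Fintype C] (p : C → ℝ)
    (hp : ∀ o, 0 < p o) (hsum : ∑ o, p o = 1) (m : ℕ) (hm : 3 ≤ m) :
    ∑ o, (1 - (1 - p o) ^ m) ≤
      ((m : ℝ) / Real.logb 2 m) * (∑ o, p o * Real.logb 2 (1 / p o)) + 3 := by
  have hp1 (o : C) : p o ≤ 1 := hsum ▸ single_le_sum (fun i _ ↦ (hp i).le) (mem_univ o)
  have hlarge : (#{o | 1 / 3 < p o} : ℝ) ≤ 3 := by
    have := card_filter_lt_mul_le_sum univ p (fun o _ ↦ (hp o).le) (1 / 3)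
    linarith
  have hm0 : log m ≠ 0 := (log_pos (by norm_cast; omega)).ne'
  calc ∑ o, (1 - (1 - p o) ^ m)
      ≤ ∑ o, (m * negMulLog (p o) / log m + if 1 / 3 < p o then 1 else 0) :=
        sum_le_sum fun o _ ↦
          one_sub_one_sub_pow_le_mul_negMulLog_div_log_add_ite hm (hp o) (hp1 o)
    _ = (m / logb 2 m) * (∑ o, p o * logb 2 (1 / p o)) + #{o | 1 / 3 < p o} := by
        rw [sum_add_distrib, sum_boole, mul_sum]
        congr 1
        refine sum_congr rfl fun o _ ↦ ?_
        rw [mul_logb_one_div_eq_negMulLog_div, logb]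
        field_simp
    _ ≤ _ := by gcongr
end
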